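/- Let f : ℝ → ℝ be C¹ and τ > 0 with |f'(t)| bounded. Define the offset abscissa map x_o(t) = t − τ f'(t)/√(1+f'(t)²). If f is C² and τ·|f''(t)|/(1+f'(t)²)^{3/2} < 1 for all t, then x_o is strictly increasing, hence injective, so the exterior offset of the Cartesian curve (t, f(t)) is itself the graph of a function. -/

import Mathlib

/-! The derivative of `t ↦ t - τ f'(t)/√(1 + f'(t)²)` is `1 - τ k(t)`, where
`k = f''/(1 + f'²)^{3/2}` is the curvature of the graph of `f`, because
`y ↦ y/√(1 + y²)` has derivative `(1 + y²)^{-3/2}`. The curvature bound makes it positive. -/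

open Real

lemma rpow_three_halves_eq_sqrt_pow_three {x : ℝ} (hx : 0 ≤ x) :
    x ^ ((3 : ℝ) / 2) = √x ^ 3 := by
  rw [sqrt_eq_rpow, ← rpow_natCast, ← rpow_mul hx]
  norm_num

lemma hasDerivAt_div_sqrt_one_add_sq (y : ℝ) :
    HasDerivAt (fun y : ℝ => y / √(1 + y ^ 2)) ((1 + y ^ 2) ^ ((3 : ℝ) / 2))⁻¹ y := by
  have hpos : 0 < 1 + y ^ 2 := by positivity
  have hsqrt : 0 < √(1 + y ^ 2) := sqrt_pos.mpr hpos
  have hsq : √(1 + y ^ 2) ^ 2 = 1 + y ^ 2 := sq_sqrt hpos.le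
  have hd_sqrt : HasDerivAt (fun y : ℝ => √(1 + y ^ 2)) (y / √(1 + y ^ 2)) y := by
    refine (((hasDerivAt_pow 2 y).const_add 1).sqrt hpos.ne').congr_deriv ?_
    field_simp
    norm_num
  refine ((hasDerivAt_id y).div hd_sqrt hsqrt.ne').congr_deriv ?_
  rw [rpow_three_halves_eq_sqrt_pow_three hpos.le]
  field_simp
  rw [id, hsq]
  ring

lemma strictMono_sub_mul_div_sqrt_one_add_sq {u : ℝ → ℝ} (hu : Differentiable ℝ u)
    {τ : ℝ} (hτ : 0 ≤ τ)
    (hsmall : ∀ t, τ * |deriv u t| / (1 + u t ^ 2) ^ ((3 : ℝ) / 2) < 1) :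
    StrictMono (fun t => t - τ * u t / √(1 + u t ^ 2)) := by
  have hderiv : ∀ t, HasDerivAt (fun t => t - τ * u t / √(1 + u t ^ 2))
      (1 - τ * deriv u t / (1 + u t ^ 2) ^ ((3 : ℝ) / 2)) t := fun t => by
    have h := ((hasDerivAt_div_sqrt_one_add_sq (u t)).comp t (hu t).hasDerivAt).const_mul τ
    simp only [Function.comp_def, ← mul_div_assoc] at h
    exact ((hasDerivAt_id' t).sub h).congr_deriv (by field_simp)
  refine strictMono_of_deriv_pos fun t => ?_
  rw [(hderiv t).deriv, sub_pos]
  refine lt_of_le_of_lt ?_ (hsmall t)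
  gcongr
  exact le_abs_self _

theorem offset_abscissa_strictMono_general
    (f : ℝ → ℝ) (hf2 : ContDiff ℝ 2 f)
    (τ : ℝ) (hτ : 0 < τ)
    (hsmall : ∀ t, τ * |deriv (deriv f) t| / (1 + deriv f t ^ 2) ^ ((3 : ℝ) / 2) < 1) :
    StrictMono (fun t => t - τ * deriv f t / Real.sqrt (1 + deriv f t ^ 2)) ∧
    Function.Injective
      (fun t => t - τ * deriv f t / Real.sqrt (1 + deriv f t ^ 2)) := by
  have hmono := strictMono_sub_mul_div_sqrt_one_add_sq hf2.differentiable_deriv_two hτ.le hsmall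
  exact ⟨hmono, hmono.injective⟩

/-- if `f` is C² with bounded derivative, `τ > 0`, and
`τ |f''| / (1 + f'²)^(3/2) < 1` everywhere, then the offset abscissa map
`x_o(t) = t - τ f'(t)/√(1 + f'(t)²)` is strictly increasing, hence injective
(so the offset of the Cartesian curve is itself the graph of a function). -/
theorem offset_abscissa_strictMono
    (f : ℝ → ℝ) (hf1 : ContDiff ℝ 1 f) (hf2 : ContDiff ℝ 2 f)
    (τ : ℝ) (hτ : 0 < τ)
    (hb : ∃ M : ℝ, ∀ t, |deriv f t| ≤ M)
    (hsmall : ∀ t, τ * |deriv (deriv f) t| / (1 + deriv f t ^ 2) ^ ((3 : ℝ) / 2) < 1) :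
    StrictMono (fun t => t - τ * deriv f t / Real.sqrt (1 + deriv f t ^ 2)) ∧
    Function.Injective
      (fun t => t - τ * deriv f t / Real.sqrt (1 + deriv f t ^ 2)) :=
  offset_abscissa_strictMono_general f hf2 τ hτ hsmall
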